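/- arXiv:2603.16626 — 3 statements merged into one kernel-verified Lean document; each statement's English description precedes it below -/
import Mathlib

section
/- Let v : ℝ≥0 → ℝ be a differentiable function satisfying v'(t) = -(1/m)·μ(v(t))·v(t) + φ(t), where m > 0, μ(x) ≥ μ₀ > 0 for all x ≠ 0 (and the product μ(v)·v is continuous with μ(0)·0 = 0), and |φ(t)| ≤ φ̄·e^{-λt} for constants φ̄ > 0, λ > 0. Then v(t) → 0 as t → ∞. -/
/-!
With `c = μ₀ / m`, the energy `v²` satisfies `(v²)' = 2 v v' ≤ -2 c v² + 2 v φ ≤ -c v² + φ² / c`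
(Young's inequality), and the forcing `φ² / c` tends to zero. Grönwall's inequality started at a
time `T` after which the forcing is below `c ε / 2` bounds `v²` by a decaying exponential plus
`ε / 2`, so `v² → 0`, hence `v → 0`.
-/

open Real Filter Topology

theorem tendsto_mul_exp_neg_mul_atTop (a : ℝ) {c : ℝ} (hc : 0 < c) :
    Tendsto (fun t => a * exp (-c * t)) atTop (𝓝 0) := by
  have h := tendsto_exp_neg_atTop_nhds_zero.comp (tendsto_id.const_mul_atTop hc)
  simpa [neg_mul] using h.const_mul a

theorem gronwallBound_neg_le {c : ℝ} (hc : 0 < c) (δ : ℝ) {ε : ℝ} (hε : 0 ≤ ε) (x : ℝ) :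
    gronwallBound δ (-c) ε x ≤ δ * exp (-c * x) + ε / c := by
  rw [gronwallBound_of_K_ne_0 (neg_ne_zero.mpr hc.ne')]
  have : 0 ≤ ε / c * exp (-c * x) := by positivity
  calc δ * exp (-c * x) + ε / -c * (exp (-c * x) - 1)
      = δ * exp (-c * x) + ε / c - ε / c * exp (-c * x) := by rw [div_neg]; ring
    _ ≤ δ * exp (-c * x) + ε / c := by linarith

theorem tendsto_zero_of_hasDerivAt_le_neg_mul_add {V V' g : ℝ → ℝ} {c : ℝ} (hc : 0 < c)
    (hV : ∀ᶠ t in atTop, HasDerivAt V (V' t) t) (hV' : ∀ᶠ t in atTop, V' t ≤ -c * V t + g t)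
    (hg : Tendsto g atTop (𝓝 0)) (hV₀ : ∀ᶠ t in atTop, 0 ≤ V t) :
    Tendsto V atTop (𝓝 0) := by
  refine tendsto_order.2 ⟨fun a ha => hV₀.mono fun t ht => ha.trans_le ht, fun ε hε => ?_⟩
  obtain ⟨T, hT⟩ := eventually_atTop.1
    (hV.and (hV'.and (hg.eventually_le_const (by positivity : 0 < c * ε / 2))))
  have gronwall : ∀ t ≥ T, V t ≤ V T * exp (-c * (t - T)) + ε / 2 := by
    intro t ht
    have hbound := le_gronwallBound_of_liminf_deriv_right_le
      (f' := V') (K := -c) (ε := c * ε / 2) (b := t)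
      (fun x hx => (hT x hx.1).1.continuousAt.continuousWithinAt)
      (fun x hx _ hr => (hT x hx.1).1.hasDerivWithinAt.liminf_right_slope_le hr) le_rfl
      (fun x hx => (hT x hx.1).2.1.trans (by linarith [(hT x hx.1).2.2])) t ⟨ht, le_rfl⟩
    calc V t ≤ _ := hbound
      _ ≤ V T * exp (-c * (t - T)) + c * ε / 2 / c := gronwallBound_neg_le hc _ (by positivity) _
      _ = V T * exp (-c * (t - T)) + ε / 2 := by field_simp
  have htail : Tendsto (fun t => V T * exp (-c * (t - T))) atTop (𝓝 0) :=
    (tendsto_mul_exp_neg_mul_atTop (V T) hc).comp (tendsto_atTop_add_const_right _ (-T) tendsto_id)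
  filter_upwards [htail.eventually_lt_const (half_pos hε), eventually_ge_atTop T] with t htail ht
  linarith [gronwall t ht]

theorem two_mul_mul_le_mul_sq_add_sq_div {c : ℝ} (hc : 0 < c) (x y : ℝ) :
    2 * x * y ≤ c * x ^ 2 + y ^ 2 / c := by
  rw [← sub_nonneg]
  have : c * x ^ 2 + y ^ 2 / c - 2 * x * y = (c * x - y) ^ 2 / c := by field_simp; ring
  rw [this]; positivity

theorem two_mul_mul_sway_rhs_le {m μ₀ : ℝ} (hm : 0 < m) (hμ₀ : 0 < μ₀) {μ : ℝ → ℝ}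
    (hμ : ∀ x : ℝ, x ≠ 0 → μ₀ ≤ μ x) (x y : ℝ) :
    2 * x * (-(1 / m) * μ x * x + y) ≤ -(μ₀ / m) * x ^ 2 + y ^ 2 / (μ₀ / m) := by
  have hdamp : μ₀ / m * x ^ 2 ≤ 1 / m * μ x * x ^ 2 := by
    rcases eq_or_ne x 0 with rfl | hx
    · simp
    · rw [← one_div_mul_eq_div]; gcongr; exact hμ x hx
  have := two_mul_mul_le_mul_sq_add_sq_div (div_pos hμ₀ hm) x y
  nlinarith

theorem sway_tendsto_zero_general (m μ₀ φbar lam : ℝ) (hm : 0 < m) (hμ₀ : 0 < μ₀)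
    (hlam : 0 < lam)
    (μ : ℝ → ℝ) (hμ : ∀ x : ℝ, x ≠ 0 → μ₀ ≤ μ x)
    (v φ : ℝ → ℝ) (hv : Differentiable ℝ v)
    (hode : ∀ t : ℝ, 0 ≤ t → deriv v t = -(1 / m) * μ (v t) * v t + φ t)
    (hφ : ∀ t : ℝ, 0 ≤ t → |φ t| ≤ φbar * Real.exp (-lam * t)) :
    Tendsto v atTop (nhds 0) := by
  have hφ_lim : Tendsto φ atTop (𝓝 0) :=
    squeeze_zero_norm' ((eventually_ge_atTop 0).mono hφ) (tendsto_mul_exp_neg_mul_atTop φbar hlam)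
  have hv_sq : Tendsto (fun t => v t ^ 2) atTop (𝓝 0) := by
    refine tendsto_zero_of_hasDerivAt_le_neg_mul_add (div_pos hμ₀ hm)
      (V' := fun t => 2 * v t * deriv v t) (g := fun t => φ t ^ 2 / (μ₀ / m))
      (Eventually.of_forall fun t => ((hv t).hasDerivAt.pow 2).congr_deriv (by ring))
      ((eventually_ge_atTop 0).mono fun t ht => ?_)
      (by simpa using (hφ_lim.pow 2).div_const (μ₀ / m))
      (Eventually.of_forall fun t => sq_nonneg _)
    rw [hode t ht]
    exact two_mul_mul_sway_rhs_le hm hμ₀ hμ (v t) (φ t)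
  rw [tendsto_zero_iff_abs_tendsto_zero]
  simpa [Function.comp_def, sqrt_sq_eq_abs] using hv_sq.sqrt

/-- Sway stability under exponentially decaying disturbance: if
v' = -(1/m)·μ(v)·v + φ, with μ bounded below away from zero, μ(v)·v continuous,
and |φ(t)| ≤ φ̄·e^{-λt}, then v(t) → 0 as t → ∞. -/
theorem sway_tendsto_zero (m μ₀ φbar lam : ℝ) (hm : 0 < m) (hμ₀ : 0 < μ₀)
    (hφbar : 0 < φbar) (hlam : 0 < lam)
    (μ : ℝ → ℝ) (hμ : ∀ x : ℝ, x ≠ 0 → μ₀ ≤ μ x)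
    (hμcont : Continuous fun x => μ x * x) (hμzero : μ 0 * 0 = 0)
    (v φ : ℝ → ℝ) (hv : Differentiable ℝ v)
    (hode : ∀ t : ℝ, 0 ≤ t → deriv v t = -(1 / m) * μ (v t) * v t + φ t)
    (hφ : ∀ t : ℝ, 0 ≤ t → |φ t| ≤ φbar * Real.exp (-lam * t)) :
    Tendsto v atTop (nhds 0) :=
  sway_tendsto_zero_general m μ₀ φbar lam hm hμ₀ hlam μ hμ v φ hv hode hφ
end

section
/- Let V : ℝ≥0 → ℝ≥0 be differentiable and satisfy V'(t) ≤ -a·V(t) + b·√(V(t))·e^{-λt}, with a > 0, b > 0, λ > 0, and 2λ < a. Then V(t) → 0 as t → ∞. -/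
open Real Filter Topology Set

/-!
Weighted AM-GM, `b √V e^{-λt} ≤ ε V + (b² / 4ε) e^{-2λt}` with `ε = (a - 2λ)/2`, turns the
inequality into the linear one `V' ≤ -(a - ε) V + C e^{-2λt}`. With the integrating factor
`e^{(a - ε)t}`, `V` stays below the solution of the corresponding linear equation, a combination
of `e^{-(a - ε)t}` and `e^{-2λt}`; both rates are positive because `a - ε > 2λ > 0`.
-/

/-- The solution of `x' = -c x + C e^{-μt}`, `x 0 = x₀`, when `c ≠ μ`. -/
noncomputable def forcedDecay (c μ C x₀ t : ℝ) : ℝ :=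
  (x₀ - C / (c - μ)) * exp (-c * t) + C / (c - μ) * exp (-μ * t)

section ForcedDecay

variable {c μ C x₀ : ℝ}

theorem forcedDecay_zero : forcedDecay c μ C x₀ 0 = x₀ := by
  simp [forcedDecay]

theorem hasDerivAt_forcedDecay (hcμ : c ≠ μ) (t : ℝ) :
    HasDerivAt (forcedDecay c μ C x₀) (-c * forcedDecay c μ C x₀ t + C * exp (-μ * t)) t := by
  have hexp (k : ℝ) : HasDerivAt (fun s => exp (k * s)) (exp (k * t) * k) t := by
    simpa using ((hasDerivAt_id t).const_mul k).exp
  refine (((hexp (-c)).const_mul (x₀ - C / (c - μ))).add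
    ((hexp (-μ)).const_mul (C / (c - μ)))).congr_deriv ?_
  unfold forcedDecay
  field_simp [sub_ne_zero.mpr hcμ]
  ring

theorem tendsto_exp_neg_mul_atTop {k : ℝ} (hk : 0 < k) :
    Tendsto (fun t => exp (-k * t)) atTop (𝓝 0) :=
  tendsto_exp_atBot.comp (tendsto_id.const_mul_atTop_of_neg (neg_neg_of_pos hk))

theorem tendsto_forcedDecay (hc : 0 < c) (hμ : 0 < μ) :
    Tendsto (forcedDecay c μ C x₀) atTop (𝓝 0) := by
  have h := ((tendsto_exp_neg_mul_atTop hc).const_mul (x₀ - C / (c - μ))).add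
    ((tendsto_exp_neg_mul_atTop hμ).const_mul (C / (c - μ)))
  rwa [mul_zero, mul_zero, add_zero] at h

theorem le_forcedDecay {f : ℝ → ℝ} (hcμ : c ≠ μ) (hf : Differentiable ℝ f)
    (hf' : ∀ t, 0 ≤ t → deriv f t ≤ -c * f t + C * exp (-μ * t)) {t : ℝ} (ht : 0 ≤ t) :
    f t ≤ forcedDecay c μ C (f 0) t := by
  set x := forcedDecay c μ C (f 0)
  -- the integrating factor `e^{cs}` makes the gap to the solution antitone
  have hgap (s : ℝ) : HasDerivAt (fun s => exp (c * s) * (f s - x s))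
      (exp (c * s) * c * (f s - x s) + exp (c * s) * (deriv f s -
        (-c * x s + C * exp (-μ * s)))) s := by
    have hexp : HasDerivAt (fun s => exp (c * s)) (exp (c * s) * c) s := by
      simpa using ((hasDerivAt_id s).const_mul c).exp
    exact hexp.mul ((hf s).hasDerivAt.sub (hasDerivAt_forcedDecay hcμ s))
  have hanti : AntitoneOn (fun s => exp (c * s) * (f s - x s)) (Ici 0) := by
    refine antitoneOn_of_hasDerivWithinAt_nonpos (convex_Ici 0)
      (fun s _ => (hgap s).continuousAt.continuousWithinAt)
      (fun s _ => (hgap s).hasDerivWithinAt) fun s hs => ?_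
    rw [interior_Ici] at hs
    have hdiff : deriv f s - (-c * x s + C * exp (-μ * s)) ≤ -c * (f s - x s) := by
      linarith [hf' s hs.le]
    nlinarith [exp_pos (c * s)]
  have hgap_t := hanti self_mem_Ici ht ht
  simp only [mul_zero, exp_zero, x, forcedDecay_zero, sub_self] at hgap_t
  exact sub_nonpos.mp (nonpos_of_mul_nonpos_right hgap_t (exp_pos _))

end ForcedDecay

theorem mul_mul_le_mul_sq_add (b x y : ℝ) {ε : ℝ} (hε : 0 < ε) :
    b * x * y ≤ ε * x ^ 2 + b ^ 2 / (4 * ε) * y ^ 2 := by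
  have hdiff : ε * x ^ 2 + b ^ 2 / (4 * ε) * y ^ 2 - b * x * y =
      (2 * ε * x - b * y) ^ 2 / (4 * ε) := by
    field_simp
    ring
  have hsq : 0 ≤ (2 * ε * x - b * y) ^ 2 / (4 * ε) := by positivity
  linarith

theorem lyapunov_sqrt_decay_general (a b lam : ℝ) (hlam : 0 < lam)
    (h2lam : 2 * lam < a) (V : ℝ → ℝ) (hVnonneg : ∀ t : ℝ, 0 ≤ V t)
    (hV : Differentiable ℝ V)
    (hineq : ∀ t : ℝ, 0 ≤ t →
      deriv V t ≤ -a * V t + b * Real.sqrt (V t) * Real.exp (-lam * t)) :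
    Tendsto V atTop (nhds 0) := by
  set ε := (a - 2 * lam) / 2 with hε_def
  have hε : 0 < ε := by linarith
  have hlin (t : ℝ) (ht : 0 ≤ t) :
      deriv V t ≤ -(a - ε) * V t + b ^ 2 / (4 * ε) * exp (-(2 * lam) * t) := by
    have hamgm := mul_mul_le_mul_sq_add b (√(V t)) (exp (-lam * t)) hε
    rw [sq_sqrt (hVnonneg t), ← exp_nat_mul] at hamgm
    have hexp : ((2 : ℕ) : ℝ) * (-lam * t) = -(2 * lam) * t := by push_cast; ring
    rw [hexp] at hamgm
    linarith [hineq t ht]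
  have hbound (t : ℝ) (ht : 0 ≤ t) := le_forcedDecay (by linarith) hV hlin ht
  exact squeeze_zero' (Eventually.of_forall hVnonneg) (eventually_atTop.mpr ⟨0, hbound⟩)
    (tendsto_forcedDecay (by linarith) (by positivity))

/-- Lyapunov differential inequality: if V ≥ 0 is differentiable and
V' ≤ -a·V + b·√V·e^{-λt} with a, b, λ > 0 and 2λ < a, then V(t) → 0. -/
theorem lyapunov_sqrt_decay (a b lam : ℝ) (ha : 0 < a) (hb : 0 < b) (hlam : 0 < lam)
    (h2lam : 2 * lam < a) (V : ℝ → ℝ) (hVnonneg : ∀ t : ℝ, 0 ≤ V t)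
    (hV : Differentiable ℝ V)
    (hineq : ∀ t : ℝ, 0 ≤ t →
      deriv V t ≤ -a * V t + b * Real.sqrt (V t) * Real.exp (-lam * t)) :
    Tendsto V atTop (nhds 0) :=
  lyapunov_sqrt_decay_general a b lam hlam h2lam V hVnonneg hV hineq
end

section
/- Let D : (finite subsets S of a set V containing a fixed depot-adjacent structure) × V → ℝ be defined by the recursion D[S, j] = min over v ∈ S \ {j} of (D[S \ {j}, v] + c(v,j)·W̄(S \ {j})), with base case D[{j}, j] = c(0,j)·W̄(∅), where W̄(S) = Σ_{u ∈ V} R(u) − Σ_{u ∈ S} R(u) and R(u) ≥ 0. Then D[S, j] equals the minimum over all orderings (v₁,…,v_k) of S with v_k = j of Σ_{i=1}^{k} c(v_{i−1}, v_i)·(total weight of spills not among v₁,…,v_{i−1}), i.e., the minimum cumulative weighted latency of any route visiting exactly S and ending at j. -/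
/-!
Strong induction on `S`. Removing the final stop `j` from a route through `S` leaves a route
through `S \ {j}` ending at some `v`, and the removed edge `v → j` costs `c v j · W̄(S \ {j})`
independently of the order of the earlier stops. So the latencies of routes through `S` ending at
`j` are exactly the translates by `c v j · W̄(S \ {j})` of those through `S \ {j}` ending at `v`,
and the least of them is the minimum over `v` of the least elements, which is the recursion.
-/

open Finset

/-- Weighted latency accumulated by a route: continuing from vertex `prev` after having
already serviced the spills in `visited`, each traversed edge cost is weighted by the
total remaining (yet-unserviced) risk weight `total - ∑_{u ∈ visited} R u`. -/
def routeLatencyAux {V : Type*} [DecidableEq V] (c : V → V → ℝ) (R : V → ℝ)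
    (total : ℝ) : V → Finset V → List V → ℝ
  | _, _, [] => 0
  | prev, visited, v :: rest =>
      c prev v * (total - ∑ u ∈ visited, R u) +
        routeLatencyAux c R total v (insert v visited) rest

theorem isLeast_add_of_isLeast_of_isLeast {ι α : Type*} [Add α] [Preorder α] [AddRightMono α]
    {T : Set ι} {A : ι → Set α} {m b : ι → α} {M : α}
    (hA : ∀ i ∈ T, IsLeast (A i) (m i)) (hM : IsLeast {x | ∃ i ∈ T, x = m i + b i} M) :
    IsLeast {x | ∃ i ∈ T, ∃ y ∈ A i, y + b i = x} M := by
  obtain ⟨⟨i, hi, hMi⟩, hM_le⟩ := hM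
  refine ⟨⟨i, hi, m i, (hA i hi).1, hMi.symm⟩, ?_⟩
  rintro _ ⟨k, hk, y, hy, rfl⟩
  calc M ≤ m k + b k := hM_le ⟨k, hk, rfl⟩
    _ ≤ y + b k := add_le_add_left ((hA k hk).2 hy) _

theorem List.nodup_append_singleton_and_toFinset_eq_iff {V : Type*} [DecidableEq V]
    {l : List V} {j : V} {S : Finset V} :
    (l ++ [j]).Nodup ∧ (l ++ [j]).toFinset = S ↔ j ∈ S ∧ l.Nodup ∧ l.toFinset = S.erase j := by
  rw [← List.concat_eq_append, List.nodup_concat, List.concat_eq_append, List.toFinset_append]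
  constructor
  · rintro ⟨⟨hj, hl⟩, rfl⟩
    refine ⟨by simp, hl, ?_⟩
    rw [List.toFinset_cons, List.toFinset_nil, insert_empty, union_singleton,
      erase_insert (by simpa using hj)]
  · rintro ⟨hj, hl, hS⟩
    have hjl : j ∉ l := by simp [← List.mem_toFinset, hS]
    refine ⟨⟨hjl, hl⟩, ?_⟩
    rw [hS, List.toFinset_cons, List.toFinset_nil, insert_empty, union_singleton,
      insert_erase hj]

section RouteLatency

variable {V : Type*} [DecidableEq V] (c : V → V → ℝ) (R : V → ℝ) (total : ℝ) (d : V)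

theorem routeLatencyAux_append_singleton (j : V) :
    ∀ (l : List V) (prev : V) (visited : Finset V),
      routeLatencyAux c R total prev visited (l ++ [j]) =
        routeLatencyAux c R total prev visited l +
          c (l.getLastD prev) j * (total - ∑ u ∈ visited ∪ l.toFinset, R u)
  | [], prev, visited => by simp [routeLatencyAux]
  | v :: rest, prev, visited => by
      have h : insert v visited ∪ rest.toFinset = visited ∪ (v :: rest).toFinset := by
        simp [insert_union, union_insert]
      rw [List.cons_append, routeLatencyAux, routeLatencyAux,
        routeLatencyAux_append_singleton j rest v (insert v visited), h, List.getLastD_cons]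
      ring

def routeLatencies (S : Finset V) (j : V) : Set ℝ :=
  {x | ∃ l : List V, l.Nodup ∧ l.toFinset = S ∧ l.getLast? = some j ∧
    routeLatencyAux c R total d ∅ l = x}

variable {c R total d}

theorem mem_routeLatencies_iff {S : Finset V} {j : V} {x : ℝ} :
    x ∈ routeLatencies c R total d S j ↔ j ∈ S ∧ ∃ l : List V, l.Nodup ∧ l.toFinset = S.erase j ∧
      routeLatencyAux c R total d ∅ l +
        c (l.getLastD d) j * (total - ∑ u ∈ S.erase j, R u) = x := by
  constructor
  · rintro ⟨_, hl, hS, hlast, rfl⟩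
    obtain ⟨l, rfl⟩ := List.getLast?_eq_some_iff.mp hlast
    obtain ⟨hj, hl, hS⟩ := List.nodup_append_singleton_and_toFinset_eq_iff.mp ⟨hl, hS⟩
    refine ⟨hj, l, hl, hS, ?_⟩
    rw [routeLatencyAux_append_singleton, empty_union, hS]
  · rintro ⟨hj, l, hl, hS, rfl⟩
    obtain ⟨hl', hS'⟩ := List.nodup_append_singleton_and_toFinset_eq_iff.mpr ⟨hj, hl, hS⟩
    refine ⟨l ++ [j], hl', hS', by simp, ?_⟩
    rw [routeLatencyAux_append_singleton, empty_union, hS]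

theorem routeLatencies_singleton (j : V) :
    routeLatencies c R total d {j} j = {c d j * total} := by
  ext x
  rw [mem_routeLatencies_iff, erase_singleton, Set.mem_singleton_iff]
  constructor
  · rintro ⟨-, l, -, hl, rfl⟩
    obtain rfl := (List.toFinset_eq_empty_iff l).mp hl
    simp [routeLatencyAux]
  · rintro rfl
    exact ⟨mem_singleton_self j, [], List.nodup_nil, rfl, by simp [routeLatencyAux]⟩

theorem routeLatencies_eq_of_nonempty_erase {S : Finset V} {j : V} (hj : j ∈ S)
    (hS : (S.erase j).Nonempty) :
    routeLatencies c R total d S j =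
      {x | ∃ v ∈ S.erase j, ∃ y ∈ routeLatencies c R total d (S.erase j) v,
        y + c v j * (total - ∑ u ∈ S.erase j, R u) = x} := by
  ext x
  rw [mem_routeLatencies_iff]
  constructor
  · rintro ⟨-, l, hl, hlS, rfl⟩
    have hne : l ≠ [] := by
      rintro rfl
      simp [← hlS] at hS
    refine ⟨l.getLast hne, ?_, _, ⟨l, hl, hlS, List.getLast?_eq_some_getLast hne, rfl⟩, ?_⟩
    · simp [← hlS, List.getLast_mem hne]
    · rw [List.getLastD_eq_getLast?, List.getLast?_eq_some_getLast hne, Option.getD_some]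
  · rintro ⟨v, -, _, ⟨l, hl, hlS, hlast, rfl⟩, rfl⟩
    refine ⟨hj, l, hl, hlS, ?_⟩
    rw [List.getLastD_eq_getLast?, hlast, Option.getD_some]

end RouteLatency

theorem dp_min_weighted_latency_general {V : Type*} [DecidableEq V]
    (d : V) (c : V → V → ℝ) (R : V → ℝ)
    (total : ℝ)
    (D : Finset V → V → ℝ)
    (hbase : ∀ j : V, j ≠ d → D {j} j = c d j * total)
    (hrec : ∀ S : Finset V, ∀ j ∈ S, d ∉ S → 2 ≤ S.card →
      IsLeast {x : ℝ | ∃ v ∈ S.erase j,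
          x = D (S.erase j) v + c v j * (total - ∑ u ∈ S.erase j, R u)} (D S j)) :
    ∀ S : Finset V, ∀ j ∈ S, d ∉ S →
      IsLeast {x : ℝ | ∃ l : List V, l.Nodup ∧ l.toFinset = S ∧
          l.getLast? = some j ∧ routeLatencyAux c R total d ∅ l = x} (D S j) := by
  intro S
  induction S using Finset.strongInduction with
  | H S ih =>
    intro j hj hd
    change IsLeast (routeLatencies c R total d S j) (D S j)
    obtain hSj | hSj := (S.erase j).eq_empty_or_nonempty
    · obtain rfl : S = {j} := ((erase_eq_empty_iff S j).mp hSj).resolve_left (ne_empty_of_mem hj)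
      rw [routeLatencies_singleton, hbase j (by rintro rfl; exact hd hj)]
      exact isLeast_singleton
    · have hcard : 2 ≤ S.card := by
        have := hSj.card_pos
        rw [card_erase_of_mem hj] at this
        omega
      rw [routeLatencies_eq_of_nonempty_erase hj hSj]
      exact isLeast_add_of_isLeast_of_isLeast
        (fun v hv => ih _ (erase_ssubset hj) v hv (fun hdS => hd (mem_of_mem_erase hdS)))
        (hrec S j hj hd hcard)

/-- Correctness of the subset dynamic program for minimum weighted latency:
if `D` satisfies the base case `D {j} j = c d j · W̄(∅)` and the recursion
`D S j = min over v ∈ S \ {j} of (D (S \ {j}) v + c v j · W̄(S \ {j}))`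
(with `W̄ S = ∑_{u ∈ V} R u − ∑_{u ∈ S} R u`), then `D S j` is the minimum cumulative
weighted latency over all routes starting at the depot `d`, visiting exactly the spills
of `S`, and ending at `j`. -/
theorem dp_min_weighted_latency {V : Type*} [Fintype V] [DecidableEq V]
    (d : V) (c : V → V → ℝ) (R : V → ℝ)
    (hc : ∀ u v : V, 0 ≤ c u v) (hR : ∀ u : V, 0 ≤ R u) (hRd : R d = 0)
    (total : ℝ) (htotal : total = ∑ u : V, R u)
    (D : Finset V → V → ℝ)
    (hbase : ∀ j : V, j ≠ d → D {j} j = c d j * total)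
    (hrec : ∀ S : Finset V, ∀ j ∈ S, d ∉ S → 2 ≤ S.card →
      IsLeast {x : ℝ | ∃ v ∈ S.erase j,
          x = D (S.erase j) v + c v j * (total - ∑ u ∈ S.erase j, R u)} (D S j)) :
    ∀ S : Finset V, ∀ j ∈ S, d ∉ S →
      IsLeast {x : ℝ | ∃ l : List V, l.Nodup ∧ l.toFinset = S ∧
          l.getLast? = some j ∧ routeLatencyAux c R total d ∅ l = x} (D S j) :=
  dp_min_weighted_latency_general d c R total D hbase hrec
end
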